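/- arXiv:1412.7553 — 2 statements merged into one kernel-verified Lean document; each statement's English description precedes it below -/
import Mathlib

section
/- For all integers b ≥ 1, m ≥ 1 and all odd integers a with 1 ≤ a ≤ 2m−1, set 2n = 2m + 2ab and p = [(2m)(a)^{2b}]. Then the partition e = [(2m)(a+1)(a)^{2b-2}(a-1)] is the Sp_{2n}-expansion of p; that is, e is a special symplectic partition of 2n, p ≤ e in the dominance order, and every special symplectic partition of 2n that is ≥ p in the dominance order is ≥ e in the dominance order. -/
namespace JLFourier

/-- The partition whose parts (indexed from `0`) are the entries of the list `l`
(entries beyond the list, and zero entries, count as absent parts). -/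
def ofList (l : List ℕ) : ℕ → ℕ := fun i => l.getD i 0

/-- The transpose of a partition `p`: its `k`-th part (indexed from `0`) is the
number of parts of `p` that are at least `k + 1`. -/
noncomputable def transpose (p : ℕ → ℕ) : ℕ → ℕ := fun k => {i | k + 1 ≤ p i}.ncard

/-- `p` is a partition of `N`: a weakly decreasing, eventually zero function
`ℕ → ℕ` (listing the parts in decreasing order, indexed from `0`) with sum `N`. -/
def IsPartition (p : ℕ → ℕ) (N : ℕ) : Prop :=
  Antitone p ∧ ∃ n, (∀ i, n ≤ i → p i = 0) ∧ ∑ i ∈ Finset.range n, p i = N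

/-- The multiplicity of `d` as a part of `p`. -/
noncomputable def mult (p : ℕ → ℕ) (d : ℕ) : ℕ := {i | p i = d}.ncard

/-- A symplectic partition of `N`: every odd part occurs with even multiplicity. -/
def IsSymplectic (p : ℕ → ℕ) (N : ℕ) : Prop :=
  IsPartition p N ∧ ∀ d, Odd d → Even (mult p d)

/-- A special symplectic partition: a symplectic partition whose transpose is
also a symplectic partition. -/
def IsSpecialSymplectic (p : ℕ → ℕ) (N : ℕ) : Prop :=
  IsSymplectic p N ∧ IsSymplectic (transpose p) N

/-- An orthogonal partition of `N`: every (positive) even part occurs with even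
multiplicity. -/
def IsOrthogonal (p : ℕ → ℕ) (N : ℕ) : Prop :=
  IsPartition p N ∧ ∀ d, 0 < d → Even d → Even (mult p d)

/-- A special orthogonal partition: an orthogonal partition whose transpose is
also an orthogonal partition. -/
def IsSpecialOrthogonal (p : ℕ → ℕ) (N : ℕ) : Prop :=
  IsOrthogonal p N ∧ IsOrthogonal (transpose p) N

/-- Dominance order: `DomLE p q` means `p ≤ q`, i.e. for every `k` the sum of the
`k` largest parts of `p` is at most the sum of the `k` largest parts of `q`. -/
def DomLE (p q : ℕ → ℕ) : Prop :=
  ∀ k, ∑ i ∈ Finset.range k, p i ≤ ∑ i ∈ Finset.range k, q i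


/-!
The transpose of a partition `q` has exactly `q (2j) - q (2j+1)` parts equal to `2j+1`, so it is
symplectic iff `q (2j) ≡ q (2j+1) mod 2` for all `j`; then every partial sum of `q` of even length
is even. For `p` the partial sum of length `k ≤ 2b+1` is `2m + (k-1)a`, which is odd for even
`k ≥ 2`, so a special symplectic `q ≥ p` beats `p` strictly at every even length
`2 ≤ k ≤ 2b`.
At an odd length `k` in between, equality would give `q (k-1) < a < q k`, against monotonicity.
Finally `e` is `p` with one unit moved from its last part to its second one, so the partial sums
of `e` exceed those of `p` by one exactly at the lengths `2 ≤ k ≤ 2b`.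
-/

open Finset

lemma mult_eq_of_setOf_eq_Ico {p : ℕ → ℕ} {d s t : ℕ} (h : {i | p i = d} = Set.Ico s t) :
    mult p d = t - s := by
  rw [mult, h, Set.ncard_Ico_nat]

section Transpose

variable {p : ℕ → ℕ} {n : ℕ}

lemma transpose_eq_card_filter (h0 : ∀ i, n ≤ i → p i = 0) (k : ℕ) :
    transpose p k = #{i ∈ range n | k < p i} := by
  rw [transpose, ← Set.ncard_coe_finset]
  congr 1
  ext i
  simp only [Set.mem_ofPred_eq, coe_filter, mem_range]
  constructor
  · intro hi
    exact ⟨by_contra fun hn => by have := h0 i (by omega); omega, hi⟩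
  · exact fun hi => hi.2

lemma transpose_antitone (h0 : ∀ i, n ≤ i → p i = 0) : Antitone (transpose p) := by
  intro k l hkl
  simp only [transpose_eq_card_filter h0]
  exact card_le_card (monotone_filter_right _ fun i hi => by omega)

lemma sum_transpose (h0 : ∀ i, n ≤ i → p i = 0) {M : ℕ} (hM : ∀ i, p i ≤ M) :
    ∑ k ∈ range M, transpose p k = ∑ i ∈ range n, p i := by
  simp only [transpose_eq_card_filter h0, card_filter]
  rw [sum_comm]
  refine sum_congr rfl fun i _ => ?_
  rw [← card_filter, show {k ∈ range M | k < p i} = range (p i) by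
    ext k; simp only [mem_filter, mem_range]; have := hM i; omega, card_range]

lemma succ_le_transpose_iff (hp : Antitone p) (h0 : ∀ i, n ≤ i → p i = 0) (k v : ℕ) :
    v + 1 ≤ transpose p k ↔ k < p v := by
  rw [transpose_eq_card_filter h0]
  constructor
  · intro hv
    by_contra! hpv
    have : {i ∈ range n | k < p i} ⊆ range v := fun i hi => by
      simp only [mem_filter, mem_range] at hi ⊢
      by_contra! hiv
      have := hp hiv
      omega
    have := card_le_card this
    simp only [card_range] at this
    omega
  · intro hpv
    have : range (v + 1) ⊆ {i ∈ range n | k < p i} := fun i hi => by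
      simp only [mem_filter, mem_range] at hi ⊢
      have := hp (show i ≤ v by omega)
      exact ⟨by_contra fun hn => by have := h0 i (by omega); omega, by omega⟩
    simpa using card_le_card this

lemma mult_transpose_succ (hp : Antitone p) (h0 : ∀ i, n ≤ i → p i = 0) (v : ℕ) :
    mult (transpose p) (v + 1) = p v - p (v + 1) := by
  refine mult_eq_of_setOf_eq_Ico (Set.ext fun k => ?_)
  have h₁ := succ_le_transpose_iff hp h0 k v
  have h₂ := succ_le_transpose_iff hp h0 k (v + 1)
  simp only [Set.mem_ofPred_eq, Set.mem_Ico]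
  omega

lemma IsPartition.isPartition_transpose {N : ℕ} (hp : IsPartition p N) :
    IsPartition (transpose p) N := by
  obtain ⟨hanti, n, h0, hsum⟩ := hp
  refine ⟨transpose_antitone h0, p 0, fun k hk => ?_, ?_⟩
  · rw [transpose_eq_card_filter h0, card_eq_zero, filter_eq_empty_iff]
    intro i _
    have := hanti (Nat.zero_le i)
    omega
  · rw [sum_transpose h0 fun i => hanti (Nat.zero_le i), hsum]

lemma IsPartition.isSymplectic_transpose_iff {N : ℕ} (hp : IsPartition p N) :
    IsSymplectic (transpose p) N ↔ ∀ j, Even (p (2 * j) - p (2 * j + 1)) := by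
  obtain ⟨n, h0, -⟩ := hp.2
  refine ⟨fun h j => ?_, fun h => ⟨hp.isPartition_transpose, ?_⟩⟩
  · rw [← mult_transpose_succ hp.1 h0]
    exact h.2 _ (odd_two_mul_add_one j)
  · rintro _ ⟨j, rfl⟩
    rw [mult_transpose_succ hp.1 h0]
    exact h j

end Transpose

section PartialSums

variable {p : ℕ → ℕ}

lemma even_sum_range_two_mul (hp : Antitone p) (hpair : ∀ j, Even (p (2 * j) - p (2 * j + 1)))
    (j : ℕ) : Even (∑ i ∈ range (2 * j), p i) := by
  induction j with
  | zero => simp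
  | succ j ih =>
    rw [show 2 * (j + 1) = 2 * j + 1 + 1 by ring, sum_range_succ, sum_range_succ]
    have := hpair j
    have := hp (Nat.le_add_right (2 * j) 1)
    rw [Nat.even_iff] at *
    omega

lemma lt_sum_range_succ_of_antitone (hp : Antitone p) {k c a : ℕ}
    (h₁ : c < ∑ i ∈ range k, p i + a) (h₂ : c + a < ∑ i ∈ range (k + 2), p i) :
    c < ∑ i ∈ range (k + 1), p i := by
  simp only [sum_range_succ] at h₂ ⊢
  have := hp (Nat.le_add_right k 1)
  omega

lemma sum_range_add_ite_eq {f g : ℕ → ℕ} {r s : ℕ}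
    (h : ∀ i, f i + (if i = r then 1 else 0) = g i + (if i = s then 1 else 0)) (k : ℕ) :
    ∑ i ∈ range k, f i + (if r < k then 1 else 0) =
      ∑ i ∈ range k, g i + (if s < k then 1 else 0) := by
  have := sum_congr rfl fun i (_ : i ∈ range k) => h i
  simpa only [sum_add_distrib, sum_ite_eq', mem_range] using this

end PartialSums

def pPartition (a b m : ℕ) : ℕ → ℕ := ofList (2 * m :: List.replicate (2 * b) a)

def ePartition (a b m : ℕ) : ℕ → ℕ :=
  ofList ([2 * m, a + 1] ++ List.replicate (2 * b - 2) a ++ [a - 1])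

variable {a b m : ℕ}

lemma pPartition_apply (i : ℕ) :
    pPartition a b m i = if i = 0 then 2 * m else if i ≤ 2 * b then a else 0 := by
  rw [pPartition, ofList, List.getD_eq_getElem?_getD]
  grind

lemma ePartition_apply (hb : 1 ≤ b) (i : ℕ) :
    ePartition a b m i = if i = 0 then 2 * m else if i = 1 then a + 1 else if i < 2 * b then a
      else if i = 2 * b then a - 1 else 0 := by
  rw [ePartition, ofList, List.getD_eq_getElem?_getD]
  grind

lemma ePartition_add_ite_eq (hb : 1 ≤ b) (ha : 1 ≤ a) (i : ℕ) :
    ePartition a b m i + (if i = 2 * b then 1 else 0) =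
      pPartition a b m i + (if i = 1 then 1 else 0) := by
  rw [ePartition_apply hb, pPartition_apply]
  split_ifs <;> omega

lemma sum_range_succ_pPartition {k : ℕ} (hk : k ≤ 2 * b) :
    ∑ i ∈ range (k + 1), pPartition a b m i = 2 * m + k * a := by
  have hsucc : ∀ i ∈ range k, pPartition a b m (i + 1) = a := fun i hi => by
    rw [mem_range] at hi
    rw [pPartition_apply, if_neg i.succ_ne_zero, if_pos (by omega)]
  rw [sum_range_succ', sum_congr rfl hsucc, sum_const, card_range, smul_eq_mul, pPartition_apply,
    if_pos rfl, add_comm]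

lemma sum_range_ePartition_eq (hb : 1 ≤ b) (ha : 1 ≤ a) (k : ℕ) :
    ∑ i ∈ range k, ePartition a b m i + (if 2 * b < k then 1 else 0) =
      ∑ i ∈ range k, pPartition a b m i + (if 1 < k then 1 else 0) :=
  sum_range_add_ite_eq (ePartition_add_ite_eq hb ha) k

lemma isPartition_ePartition (hb : 1 ≤ b) (ha : 1 ≤ a) (hm : a + 1 ≤ 2 * m) :
    IsPartition (ePartition a b m) (2 * m + 2 * a * b) := by
  refine ⟨fun i j hij => ?_, 2 * b + 1, fun i hi => ?_, ?_⟩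
  · rw [ePartition_apply hb, ePartition_apply hb]
    split_ifs <;> omega
  · rw [ePartition_apply hb]
    split_ifs <;> omega
  · have := sum_range_ePartition_eq (m := m) hb ha (2 * b + 1)
    rw [sum_range_succ_pPartition le_rfl, if_pos (by omega), if_pos (by omega)] at this
    linarith

lemma isSpecialSymplectic_ePartition (hb : 1 ≤ b) (haodd : Odd a) (ha : a ≤ 2 * m - 1) :
    IsSpecialSymplectic (ePartition a b m) (2 * m + 2 * a * b) := by
  have ha1 : 1 ≤ a := haodd.pos
  have ha_mod : a % 2 = 1 := Nat.odd_iff.1 haodd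
  have hpart := isPartition_ePartition (m := m) hb ha1 (by omega)
  refine ⟨⟨hpart, fun d hd => ?_⟩, hpart.isSymplectic_transpose_iff.2 fun j => ?_⟩
  · have hd_mod := Nat.odd_iff.1 hd
    by_cases hda : d = a
    · rw [mult_eq_of_setOf_eq_Ico (s := 2) (t := 2 * b) (Set.ext fun i => ?_)]
      · exact ⟨b - 1, by omega⟩
      · simp only [Set.mem_ofPred_eq, Set.mem_Ico, ePartition_apply hb]
        split_ifs <;> omega
    · have hempty : {i | ePartition a b m i = d} = ∅ := by
        refine Set.eq_empty_of_forall_notMem fun i => ?_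
        simp only [Set.mem_ofPred_eq, ePartition_apply hb]
        split_ifs <;> omega
      rw [mult, hempty, Set.ncard_empty]
      exact Even.zero
  · rw [Nat.even_iff, ePartition_apply hb, ePartition_apply hb]
    split_ifs <;> omega

lemma domLE_pPartition_ePartition (hb : 1 ≤ b) (ha : 1 ≤ a) :
    DomLE (pPartition a b m) (ePartition a b m) := fun k => by
  have := sum_range_ePartition_eq (m := m) hb ha k
  split_ifs at this <;> omega

lemma domLE_ePartition_of_domLE (hb : 1 ≤ b) (haodd : Odd a) {q : ℕ → ℕ} (hq : Antitone q)
    (hpair : ∀ j, Even (q (2 * j) - q (2 * j + 1))) (hpq : DomLE (pPartition a b m) q) :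
    DomLE (ePartition a b m) q := by
  have hstep : ∀ k, 1 ≤ k → k ≤ 2 * b →
      ∑ i ∈ range (k + 1), pPartition a b m i = ∑ i ∈ range k, pPartition a b m i + a :=
    fun k hk hkb => by rw [sum_range_succ, pPartition_apply, if_neg (by omega), if_pos hkb]
  have heven : ∀ j, 1 ≤ j → j ≤ b →
      ∑ i ∈ range (2 * j), pPartition a b m i < ∑ i ∈ range (2 * j), q i := by
    intro j hj hjb
    obtain ⟨i, rfl⟩ := Nat.exists_eq_add_of_le' hj
    have hp_odd : Odd (∑ k ∈ range (2 * (i + 1)), pPartition a b m k) := by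
      rw [mul_add_one, sum_range_succ_pPartition (by omega)]
      exact (even_two_mul m).add_odd ((odd_two_mul_add_one i).mul haodd)
    have hq_even := even_sum_range_two_mul hq hpair (i + 1)
    exact (hpq _).lt_of_ne fun h => Nat.not_even_iff_odd.2 hp_odd (h ▸ hq_even)
  have hodd : ∀ j, 1 ≤ j → j < b →
      ∑ i ∈ range (2 * j + 1), pPartition a b m i < ∑ i ∈ range (2 * j + 1), q i :=
    fun j hj hjb => by
      refine lt_sum_range_succ_of_antitone hq (a := a) ?_ ?_
      · rw [hstep _ (by omega) (by omega)]
        exact Nat.add_lt_add_right (heven j hj hjb.le) a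
      · rw [← hstep _ (by omega) (by omega), ← mul_add_one]
        exact heven (j + 1) (by omega) hjb
  intro k
  have he := sum_range_ePartition_eq (m := m) hb haodd.pos k
  have := hpq k
  by_cases hk : 2 ≤ k ∧ k ≤ 2 * b
  · obtain ⟨j, rfl | rfl⟩ := Nat.even_or_odd' k
    · have := heven j (by omega) (by omega)
      split_ifs at he <;> omega
    · have := hodd j (by omega) (by omega)
      split_ifs at he <;> omega
  · split_ifs at he <;> omega

theorem stmt8_general (a b m : ℕ) (hb : 1 ≤ b) (haodd : Odd a) (ha2 : a ≤ 2 * m - 1) :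
    IsSpecialSymplectic (ofList ([2 * m, a + 1] ++ List.replicate (2 * b - 2) a ++ [a - 1])) (2 * m + 2 * a * b) ∧
    DomLE (ofList (2 * m :: List.replicate (2 * b) a))
      (ofList ([2 * m, a + 1] ++ List.replicate (2 * b - 2) a ++ [a - 1])) ∧
    ∀ e : ℕ → ℕ, IsSpecialSymplectic e (2 * m + 2 * a * b) →
      DomLE (ofList (2 * m :: List.replicate (2 * b) a)) e →
      DomLE (ofList ([2 * m, a + 1] ++ List.replicate (2 * b - 2) a ++ [a - 1])) e := by
  refine ⟨isSpecialSymplectic_ePartition hb haodd ha2, domLE_pPartition_ePartition hb haodd.pos,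
    fun q hq hpq => domLE_ePartition_of_domLE hb haodd hq.1.1.1 ?_ hpq⟩
  exact hq.1.1.isSymplectic_transpose_iff.1 hq.2

theorem stmt8 (a b m : ℕ) (hb : 1 ≤ b) (hm : 1 ≤ m) (haodd : Odd a)
    (ha1 : 1 ≤ a) (ha2 : a ≤ 2 * m - 1) :
    IsSpecialSymplectic (ofList ([2 * m, a + 1] ++ List.replicate (2 * b - 2) a ++ [a - 1])) (2 * m + 2 * a * b) ∧
    DomLE (ofList (2 * m :: List.replicate (2 * b) a))
      (ofList ([2 * m, a + 1] ++ List.replicate (2 * b - 2) a ++ [a - 1])) ∧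
    ∀ e : ℕ → ℕ, IsSpecialSymplectic e (2 * m + 2 * a * b) →
      DomLE (ofList (2 * m :: List.replicate (2 * b) a)) e →
      DomLE (ofList ([2 * m, a + 1] ++ List.replicate (2 * b - 2) a ++ [a - 1])) e :=
  stmt8_general a b m hb haodd ha2

end JLFourier
end

section
/- For every integer e ≥ 1, the partition [3(2)^{2e-2}(1)^{2}] of 4e+1 is the smallest special orthogonal partition of 4e+1 dominating [2^{2e}1]; that is, [3(2)^{2e-2}(1)^{2}] is a special orthogonal partition, [2^{2e}1] ≤ [3(2)^{2e-2}(1)^{2}] in the dominance order, and every special orthogonal partition of 4e+1 that is ≥ [2^{2e}1] in the dominance order is ≥ [3(2)^{2e-2}(1)^{2}] in the dominance order. -/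
namespace JLFourier

def qf (e : ℕ) : ℕ → ℕ := fun i =>
  if i = 0 then 3 else if i ≤ 2*e-2 then 2 else if i ≤ 2*e then 1 else 0
def pf (e : ℕ) : ℕ → ℕ := fun i => if i < 2*e then 2 else if i = 2*e then 1 else 0
def tf (e : ℕ) : ℕ → ℕ := fun k =>
  if k = 0 then 2*e+1 else if k = 1 then 2*e-1 else if k = 2 then 1 else 0

lemma ncard_lt (m : ℕ) : {i : ℕ | i < m}.ncard = m := by
  have h : {i : ℕ | i < m} = ↑(Finset.range m) := by ext i; simp
  rw [h, Set.ncard_coe_finset, Finset.card_range]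

lemma set_eq_lt {S : Set ℕ} {m : ℕ} (h : ∀ i, i ∈ S ↔ i < m) : S.ncard = m := by
  have h2 : S = {i : ℕ | i < m} := Set.ext h
  rw [h2, ncard_lt]

lemma ncard_Icc' (a b : ℕ) : {i : ℕ | a ≤ i ∧ i < b}.ncard = b - a := by
  have h : {i : ℕ | a ≤ i ∧ i < b} = ↑(Finset.Ico a b) := by ext i; simp
  rw [h, Set.ncard_coe_finset, Nat.card_Ico]

lemma ofList_q (e : ℕ) (he : 1 ≤ e) :
    ofList (3 :: (List.replicate (2 * e - 2) 2 ++ [1, 1])) = qf e := by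
  funext i
  unfold ofList qf
  rcases i with _ | j
  · rfl
  · simp only [List.getD_cons_succ]
    by_cases hj : j < 2*e-2
    · rw [List.getD_eq_getElem?_getD, List.getElem?_append_left (by simpa using hj)]
      simp only [List.getElem?_replicate, if_pos hj, Option.getD_some,
        if_neg (Nat.succ_ne_zero j)]
      split_ifs <;> omega
    · rw [List.getD_eq_getElem?_getD, List.getElem?_append_right (by simpa using hj)]
      simp only [List.length_replicate]
      rcases h2 : j - (2*e-2) with _ | _ | r <;>
        simp_all [if_neg (Nat.succ_ne_zero j)] <;> (try split_ifs) <;> omega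

lemma ofList_p (e : ℕ) :
    ofList (List.replicate (2 * e) 2 ++ [1]) = pf e := by
  funext i
  unfold ofList pf
  by_cases hi : i < 2*e
  · rw [List.getD_eq_getElem?_getD, List.getElem?_append_left (by simpa using hi)]
    simp only [List.getElem?_replicate, if_pos hi, Option.getD_some]
  · rw [List.getD_eq_getElem?_getD, List.getElem?_append_right (by simpa using hi)]
    simp only [List.length_replicate]
    rcases h2 : i - 2*e with _ | r <;> simp_all <;> (try split_ifs) <;> omega

lemma sum_pf (e k : ℕ) :
    ∑ i ∈ Finset.range k, pf e i = if k ≤ 2*e then 2*k else 4*e+1 := by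
  induction k with
  | zero => simp
  | succ k ih =>
    rw [Finset.sum_range_succ, ih]
    simp only [pf]
    split_ifs <;> omega

lemma sum_qf (e k : ℕ) (he : 1 ≤ e) :
    ∑ i ∈ Finset.range k, qf e i =
      if k = 0 then 0 else if k < 2*e then 2*k+1 else min (2*k) (4*e+1) := by
  induction k with
  | zero => simp
  | succ k ih =>
    rw [Finset.sum_range_succ, ih, if_neg (Nat.succ_ne_zero k)]
    simp only [qf]
    split_ifs <;> omega

lemma anti_qf (e : ℕ) (he : 1 ≤ e) : Antitone (qf e) := by
  intro a b h; simp only [qf]; split_ifs <;> omega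

lemma anti_tf (e : ℕ) (he : 1 ≤ e) : Antitone (tf e) := by
  intro a b h; simp only [tf]; split_ifs <;> omega

lemma transpose_qf (e : ℕ) (he : 1 ≤ e) : transpose (qf e) = tf e := by
  funext k
  show ({i | k + 1 ≤ qf e i}).ncard = tf e k
  apply set_eq_lt
  intro i
  simp only [Set.mem_setOf_eq, qf, tf]
  split_ifs <;> omega

lemma sum_tf (e : ℕ) (he : 1 ≤ e) : ∑ i ∈ Finset.range 3, tf e i = 4*e+1 := by
  simp [Finset.sum_range_succ, tf]; omega

lemma mult_qf (e : ℕ) (he : 1 ≤ e) (d : ℕ) (hd : 0 < d) (hde : Even d) :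
    Even (mult (qf e) d) := by
  have hd2 : d % 2 = 0 := Nat.even_iff.mp hde
  by_cases h2 : d = 2
  · subst h2
    have hm : mult (qf e) 2 = 2*e - 2 := by
      show ({i | qf e i = 2}).ncard = 2*e-2
      have h3 : {i | qf e i = 2} = {i : ℕ | 1 ≤ i ∧ i < 2*e-1} := by
        ext i; simp only [Set.mem_setOf_eq, qf]; split_ifs <;> simp_all <;> omega
      rw [h3, ncard_Icc']
      omega
    rw [hm]
    exact ⟨e - 1, by omega⟩
  · have hm : mult (qf e) d = 0 := by
      show ({i | qf e i = d}).ncard = 0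
      have h3 : {i | qf e i = d} = ∅ := by
        ext i
        simp only [Set.mem_setOf_eq, Set.mem_empty_iff_false, iff_false, qf]
        split_ifs <;> omega
      rw [h3, Set.ncard_empty]
    rw [hm]; exact Even.zero

lemma mult_tf (e : ℕ) (he : 1 ≤ e) (d : ℕ) (hd : 0 < d) (hde : Even d) :
    Even (mult (tf e) d) := by
  have hd2 : d % 2 = 0 := Nat.even_iff.mp hde
  have hm : mult (tf e) d = 0 := by
    show ({i | tf e i = d}).ncard = 0
    have h3 : {i | tf e i = d} = ∅ := by
      ext i
      simp only [Set.mem_setOf_eq, Set.mem_empty_iff_false, iff_false, tf]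
      split_ifs <;> omega
    rw [h3, Set.ncard_empty]
  rw [hm]; exact Even.zero

lemma level (c : ℕ → ℕ) (hmono : Antitone c) (hz : ∃ j, c j = 0) (v : ℕ) (hv : 1 ≤ v) :
    ∃ m, ∀ i, v ≤ c i ↔ i < m := by
  obtain ⟨j, hj⟩ := hz
  have hex : ∃ i, c i < v := ⟨j, by omega⟩
  refine ⟨Nat.find hex, fun i => ⟨?_, ?_⟩⟩
  · intro h
    by_contra hlt
    push_neg at hlt
    have h1 := hmono hlt
    have h2 := Nat.find_spec hex
    omega
  · intro h
    have := Nat.find_min hex h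
    omega

lemma sum_ind (m : ℕ) : ∀ n, ∑ i ∈ Finset.range n, (if i < m then (1:ℕ) else 0) = min m n := by
  intro n
  induction n with
  | zero => simp
  | succ n ih =>
    rw [Finset.sum_range_succ, ih]
    split_ifs <;> omega

lemma key (e : ℕ) (he : 1 ≤ e) (c : ℕ → ℕ)
    (h : IsSpecialOrthogonal c (4 * e + 1)) (hpc : DomLE (pf e) c) :
    DomLE (qf e) c := by
  intro k
  rw [sum_qf e k he]
  by_cases hk0 : k = 0
  · simp [hk0]
  by_cases hk2e : 2 * e ≤ k
  · have h1 := hpc k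
    rw [sum_pf] at h1
    split_ifs at h1 ⊢ <;> omega
  push_neg at hk2e
  rw [if_neg hk0, if_pos hk2e]
  have h1 := hpc k
  rw [sum_pf, if_pos (by omega : k ≤ 2*e)] at h1
  by_contra hcon
  push_neg at hcon
  have hS : ∑ i ∈ Finset.range k, c i = 2 * k := by omega
  obtain ⟨⟨⟨hmono, n, hn0, hsum⟩, hcm⟩, ⟨_, htm⟩⟩ := h
  have hck : 2 ≤ c k := by
    have h2 := hpc (k + 1)
    rw [sum_pf, if_pos (by omega : k + 1 ≤ 2*e), Finset.sum_range_succ, hS] at h2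
    omega
  have hc0ge : 2 ≤ c 0 := le_trans hck (hmono (Nat.zero_le k))
  have hc0 : c 0 = 2 := by
    have hge : ∀ i ∈ Finset.range (k - 1), 2 ≤ c (i + 1) := by
      intro i hi
      simp only [Finset.mem_range] at hi
      exact le_trans hck (hmono (by omega))
    have hlow := Finset.sum_le_sum hge
    simp only [Finset.sum_const, Finset.card_range, smul_eq_mul] at hlow
    have hsum' : (∑ i ∈ Finset.range (k - 1), c (i + 1)) + c 0 = 2 * k := by
      rw [← Finset.sum_range_succ' c (k - 1), show k - 1 + 1 = k by omega, hS]
    omega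
  have hle2 : ∀ i, c i ≤ 2 := fun i => le_trans (hmono (Nat.zero_le i)) (le_of_eq hc0)
  obtain ⟨m, hm⟩ := level c hmono ⟨n, hn0 n le_rfl⟩ 2 one_le_two
  obtain ⟨t, ht⟩ := level c hmono ⟨n, hn0 n le_rfl⟩ 1 le_rfl
  have hm0 : 0 < m := (hm 0).1 (by omega)
  have hmn : m ≤ n := by
    by_contra h'
    push_neg at h'
    have h2 := (hm n).2 h'
    have h3 := hn0 n le_rfl
    omega
  have htn : t ≤ n := by
    by_contra h'
    push_neg at h'
    have h2 := (ht n).2 h'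
    have h3 := hn0 n le_rfl
    omega
  have hsum2 : m + t = 4 * e + 1 := by
    have hpt : ∀ i ∈ Finset.range n, c i =
        (if i < m then 1 else 0) + (if i < t then 1 else 0) := by
      intro i _
      have hli := hle2 i
      by_cases a : i < m <;> by_cases b : i < t <;> simp only [a, b, if_true, if_false]
      · have := (hm i).2 a; omega
      · exact absurd ((ht i).1 (le_trans one_le_two ((hm i).2 a))) b
      · have h4 : ¬ 2 ≤ c i := fun h' => a ((hm i).1 h')
        have h5 := (ht i).2 b
        omega
      · have h4 : ¬ 2 ≤ c i := fun h' => a ((hm i).1 h')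
        have h5 : ¬ 1 ≤ c i := fun h' => b ((ht i).1 h')
        omega
    have h6 : ∑ i ∈ Finset.range n, c i =
        ∑ i ∈ Finset.range n, ((if i < m then 1 else 0) + (if i < t then 1 else 0)) :=
      Finset.sum_congr rfl hpt
    rw [Finset.sum_add_distrib, sum_ind, sum_ind, hsum] at h6
    omega
  have hmeven : Even m := by
    have h7 := hcm 2 two_pos even_two
    have hmm : mult c 2 = m := by
      apply set_eq_lt
      intro i
      simp only [Set.mem_setOf_eq]
      constructor
      · intro h'; exact (hm i).1 (le_of_eq h'.symm)
      · intro h'; have := (hm i).2 h'; have := hle2 i; omega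
    rwa [hmm] at h7
  have htr0 : transpose c 0 = t := set_eq_lt fun i => by simpa using ht i
  have htr1 : transpose c 1 = m := set_eq_lt fun i => by simpa using hm i
  have htr2 : ∀ j, 2 ≤ j → transpose c j = 0 := by
    intro j hj
    show ({i | j + 1 ≤ c i}).ncard = 0
    have hset : {i | j + 1 ≤ c i} = ∅ := by
      ext i
      simp only [Set.mem_setOf_eq, Set.mem_empty_iff_false, iff_false]
      have := hle2 i
      omega
    rw [hset, Set.ncard_empty]
  have hmultm : mult (transpose c) m = 1 := by
    show ({j | transpose c j = m}).ncard = 1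
    have hset : {j | transpose c j = m} = {1} := by
      ext j
      simp only [Set.mem_setOf_eq, Set.mem_singleton_iff]
      constructor
      · intro hj
        rcases j with _ | _ | j
        · rw [htr0] at hj; omega
        · rfl
        · rw [htr2 (j + 2) (by omega)] at hj; omega
      · rintro rfl; exact htr1
    rw [hset, Set.ncard_singleton]
  have h8 := htm m hm0 hmeven
  rw [hmultm] at h8
  exact absurd h8 (by decide)

lemma zero_qf (e : ℕ) (he : 1 ≤ e) : ∀ i, 2*e+1 ≤ i → qf e i = 0 := by
  intro i hi; simp only [qf]; split_ifs <;> omega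

lemma zero_tf (e : ℕ) : ∀ i, 3 ≤ i → tf e i = 0 := by
  intro i hi; simp only [tf]; split_ifs <;> omega

theorem stmt17 (e : ℕ) (he : 1 ≤ e) :
    IsSpecialOrthogonal (ofList (3 :: (List.replicate (2 * e - 2) 2 ++ [1, 1]))) (4 * e + 1) ∧
    DomLE (ofList (List.replicate (2 * e) 2 ++ [1])) (ofList (3 :: (List.replicate (2 * e - 2) 2 ++ [1, 1]))) ∧
    ∀ c : ℕ → ℕ, IsSpecialOrthogonal c (4 * e + 1) →
      DomLE (ofList (List.replicate (2 * e) 2 ++ [1])) c →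
      DomLE (ofList (3 :: (List.replicate (2 * e - 2) 2 ++ [1, 1]))) c := by
  rw [ofList_q e he, ofList_p e]
  refine ⟨⟨⟨⟨anti_qf e he, 2*e+1, zero_qf e he, ?_⟩, mult_qf e he⟩, ?_⟩, ?_, ?_⟩
  · rw [sum_qf e _ he, if_neg (by omega : ¬(2*e+1 = 0))]
    split_ifs <;> omega
  · rw [transpose_qf e he]
    exact ⟨⟨anti_tf e he, 3, zero_tf e, sum_tf e he⟩, mult_tf e he⟩
  · intro k
    rw [sum_pf, sum_qf e k he]
    split_ifs <;> omega
  · exact fun c hc hpc => key e he c hc hpc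

end JLFourier
end
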